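/- arXiv:2411.06106 — 5 statements merged into one kernel-verified Lean document; each statement's English description precedes it below -/
import Mathlib

section
/- Let X be a measurable space, let μS and μT be probability measures on X, let G be a nonempty set of measurable hypotheses g : X → Bool, and let fS, fT : X → Bool be measurable labeling functions. Then for every hypothesis g ∈ G, the target risk is bounded by the source risk plus half the GΔG-divergence plus the joint optimal risk: err_{μT}(g, fT) ≤ err_{μS}(g, fS) + (1/2)·d_{GΔG}(μS, μT) + λ, where λ := inf_{g* ∈ G} (err_{μS}(g*, fS) + err_{μT}(g*, fT)). -/
open MeasureTheory

/-- Disagreement error of two Boolean hypotheses under a measure. -/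
noncomputable def err {X : Type*} [MeasurableSpace X] (μ : Measure X) (g g' : X → Bool) : ℝ :=
  (μ {x | g x ≠ g' x}).toReal

/-- The `GΔG`-divergence between two measures, for a hypothesis class `G`. -/
noncomputable def dGDG {X : Type*} [MeasurableSpace X] (G : Set (X → Bool))
    (μ ν : Measure X) : ℝ :=
  2 * sSup {r : ℝ | ∃ g ∈ G, ∃ g' ∈ G, r = |err μ g g' - err ν g g'|}

lemma err_nonneg {X : Type*} [MeasurableSpace X] (μ : Measure X) (g g' : X → Bool) :
    0 ≤ err μ g g' := ENNReal.toReal_nonneg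

lemma err_le_one {X : Type*} [MeasurableSpace X] (μ : Measure X) [IsProbabilityMeasure μ]
    (g g' : X → Bool) : err μ g g' ≤ 1 := by
  have h : μ {x | g x ≠ g' x} ≤ 1 := prob_le_one
  calc (μ {x | g x ≠ g' x}).toReal ≤ (1 : ENNReal).toReal :=
        ENNReal.toReal_mono ENNReal.one_ne_top h
    _ = 1 := by simp

lemma err_symm {X : Type*} [MeasurableSpace X] (μ : Measure X) (g g' : X → Bool) :
    err μ g g' = err μ g' g := by
  unfold err
  have h : {x | g x ≠ g' x} = {x | g' x ≠ g x} := by ext x; exact ne_comm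
  rw [h]

lemma err_triangle {X : Type*} [MeasurableSpace X] (μ : Measure X) [IsFiniteMeasure μ]
    (a b c : X → Bool) : err μ a c ≤ err μ a b + err μ b c := by
  have hsub : {x | a x ≠ c x} ⊆ {x | a x ≠ b x} ∪ {x | b x ≠ c x} := by
    intro x hx
    by_contra h
    simp only [Set.mem_union, Set.mem_setOf_eq, not_or, not_not] at h
    exact hx (h.1.trans h.2)
  calc (μ {x | a x ≠ c x}).toReal
      ≤ (μ ({x | a x ≠ b x} ∪ {x | b x ≠ c x})).toReal :=
        ENNReal.toReal_mono (measure_ne_top _ _) (measure_mono hsub)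
    _ ≤ (μ {x | a x ≠ b x} + μ {x | b x ≠ c x}).toReal :=
        ENNReal.toReal_mono (by finiteness) (measure_union_le _ _)
    _ = (μ {x | a x ≠ b x}).toReal + (μ {x | b x ≠ c x}).toReal :=
        ENNReal.toReal_add (measure_ne_top _ _) (measure_ne_top _ _)

theorem target_risk_bound {X : Type*} [MeasurableSpace X]
    (μS μT : Measure X) [IsProbabilityMeasure μS] [IsProbabilityMeasure μT]
    (G : Set (X → Bool)) (hG : G.Nonempty) (hGmeas : ∀ g ∈ G, Measurable g)
    (fS fT : X → Bool) (hfS : Measurable fS) (hfT : Measurable fT)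
    (g : X → Bool) (hg : g ∈ G) :
    err μT g fT ≤ err μS g fS + (1 / 2) * dGDG G μS μT +
      sInf {r : ℝ | ∃ g' ∈ G, r = err μS g' fS + err μT g' fT} := by
  set S := {r : ℝ | ∃ g ∈ G, ∃ g' ∈ G, r = |err μS g g' - err μT g g'|}
  have hbdd : BddAbove S := by
    refine ⟨1, ?_⟩
    rintro r ⟨a, -, b, -, rfl⟩
    rw [abs_sub_le_iff]
    constructor <;> nlinarith [err_le_one μS a b, err_le_one μT a b,
      err_nonneg μS a b, err_nonneg μT a b]
  have key : ∀ g' ∈ G,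
      err μT g fT ≤ err μS g fS + (1 / 2) * dGDG G μS μT +
        (err μS g' fS + err μT g' fT) := by
    intro g' hg'
    have h1 : err μT g fT ≤ err μT g g' + err μT g' fT := err_triangle μT g g' fT
    have h2 : err μT g g' ≤ err μS g g' + |err μS g g' - err μT g g'| := by
      have := abs_sub_abs_le_abs_sub (err μS g g') (err μT g g')
      have h := neg_abs_le (err μS g g' - err μT g g')
      linarith
    have h3 : |err μS g g' - err μT g g'| ≤ (1 / 2) * dGDG G μS μT := by
      have hle : |err μS g g' - err μT g g'| ≤ sSup S :=
        le_csSup hbdd ⟨g, hg, g', hg', rfl⟩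
      unfold dGDG
      linarith
    have h4 : err μS g g' ≤ err μS g fS + err μS g' fS := by
      have := err_triangle μS g fS g'
      rw [err_symm μS fS g'] at this
      exact this
    linarith
  have hne : {r : ℝ | ∃ g' ∈ G, r = err μS g' fS + err μT g' fT}.Nonempty := by
    obtain ⟨g₀, hg₀⟩ := hG
    exact ⟨_, g₀, hg₀, rfl⟩
  have : err μT g fT - (err μS g fS + (1 / 2) * dGDG G μS μT) ≤
      sInf {r : ℝ | ∃ g' ∈ G, r = err μS g' fS + err μT g' fT} := by
    apply le_csInf hne
    rintro r ⟨g', hg', rfl⟩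
    linarith [key g' hg']
  linarith
end

section
/- Let X be a measurable space, let μS and μT be probability measures on X, let G be a set of measurable hypotheses g : X → Bool, and let fS, fT : X → Bool be measurable labeling functions. Then for any two hypotheses g, g* ∈ G, err_{μT}(g, fT) ≤ err_{μS}(g, fS) + (1/2)·d_{GΔG}(μS, μT) + err_{μS}(g*, fS) + err_{μT}(g*, fT). -/
open MeasureTheory

/-!
Under either measure, `err` is a pseudometric on hypotheses. Going from `g` to `fT` through
`g*` under `μT`, the divergence pays for replacing `err μT g g*` by `err μS g g*`, and the
triangle inequality under `μS`, now through `fS`, bounds `err μS g g*`.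
-/

section Err

variable {X : Type*} [MeasurableSpace X] (μ : Measure X)

lemma err_comm (g g' : X → Bool) : err μ g g' = err μ g' g := by
  simp only [err, ne_comm]

lemma err_le_err_add_err [IsFiniteMeasure μ] (a b c : X → Bool) :
    err μ a c ≤ err μ a b + err μ b c := by
  have hsub : {x | a x ≠ c x} ⊆ {x | a x ≠ b x} ∪ {x | b x ≠ c x} := by
    intro x hac
    by_cases hab : a x = b x
    · exact Or.inr fun hbc => hac (hab.trans hbc)
    · exact Or.inl hab
  exact (measureReal_mono hsub).trans (measureReal_union_le _ _)

lemma abs_err_sub_err_le_one [IsZeroOrProbabilityMeasure μ] (ν : Measure X)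
    [IsZeroOrProbabilityMeasure ν] (g g' : X → Bool) :
    |err μ g g' - err ν g g'| ≤ 1 :=
  abs_sub_le_of_nonneg_of_le measureReal_nonneg measureReal_le_one measureReal_nonneg
    measureReal_le_one

end Err

lemma abs_err_sub_err_le_half_dGDG {X : Type*} [MeasurableSpace X] (μ ν : Measure X)
    [IsZeroOrProbabilityMeasure μ] [IsZeroOrProbabilityMeasure ν] {G : Set (X → Bool)}
    {g g' : X → Bool} (hg : g ∈ G) (hg' : g' ∈ G) :
    |err μ g g' - err ν g g'| ≤ (1 / 2) * dGDG G μ ν := by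
  have hbdd : BddAbove {r : ℝ | ∃ g ∈ G, ∃ g' ∈ G, r = |err μ g g' - err ν g g'|} := by
    refine ⟨1, ?_⟩
    rintro r ⟨a, -, b, -, rfl⟩
    exact abs_err_sub_err_le_one μ ν a b
  have := le_csSup hbdd ⟨g, hg, g', hg', rfl⟩
  rw [dGDG]
  linarith

theorem target_risk_bound_of_hypothesis_general {X : Type*} [MeasurableSpace X]
    (μS μT : Measure X) [IsProbabilityMeasure μS] [IsProbabilityMeasure μT]
    (G : Set (X → Bool))
    (fS fT : X → Bool)
    (g gstar : X → Bool) (hg : g ∈ G) (hgstar : gstar ∈ G) :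
    err μT g fT ≤ err μS g fS + (1 / 2) * dGDG G μS μT +
      err μS gstar fS + err μT gstar fT := by
  have hshift := (abs_le.mp (abs_err_sub_err_le_half_dGDG μS μT hg hgstar)).1
  calc err μT g fT ≤ err μT g gstar + err μT gstar fT := err_le_err_add_err μT g gstar fT
    _ ≤ err μS g gstar + (1 / 2) * dGDG G μS μT + err μT gstar fT := by linarith
    _ ≤ err μS g fS + err μS fS gstar + (1 / 2) * dGDG G μS μT + err μT gstar fT := by
      gcongr; exact err_le_err_add_err μS g fS gstar
    _ = err μS g fS + (1 / 2) * dGDG G μS μT + err μS gstar fS + err μT gstar fT := by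
      rw [err_comm μS fS gstar]; ring

theorem target_risk_bound_of_hypothesis {X : Type*} [MeasurableSpace X]
    (μS μT : Measure X) [IsProbabilityMeasure μS] [IsProbabilityMeasure μT]
    (G : Set (X → Bool)) (hGmeas : ∀ g ∈ G, Measurable g)
    (fS fT : X → Bool) (hfS : Measurable fS) (hfT : Measurable fT)
    (g gstar : X → Bool) (hg : g ∈ G) (hgstar : gstar ∈ G) :
    err μT g fT ≤ err μS g fS + (1 / 2) * dGDG G μS μT +
      err μS gstar fS + err μT gstar fT :=
  target_risk_bound_of_hypothesis_general μS μT G fS fT g gstar hg hgstar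
end

section
/- Chain rule for Kullback–Leibler divergence: let H and M be standard Borel measurable spaces, let μ and ν be probability measures on H, and let κ, η : H → Measure M be Markov kernels. Then the KL divergence of the joint measures obtained by composition-product decomposes as KL(μ ⊗ₘ κ ‖ ν ⊗ₘ η) = KL(μ ‖ ν) + ∫⁻ KL(κ(x) ‖ η(x)) dμ(x), where KL denotes the Kullback–Leibler divergence valued in ℝ≥0∞. -/
open MeasureTheory ProbabilityTheory
open scoped ENNReal Classical


open MeasureTheory ProbabilityTheory Real Filter Set
open scoped ENNReal NNReal

set_option linter.unusedSectionVars false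
namespace KLaux

lemma mul_neglog_le_one {t : ℝ} (ht : 0 ≤ t) : t * max (-Real.log t) 0 ≤ 1 := by
  rcases eq_or_lt_of_le ht with h | h
  · simp [← h]
  rcases le_or_gt (-Real.log t) 0 with h2 | h2
  · simp [max_eq_right h2]
  · have hinv : Real.log t⁻¹ ≤ t⁻¹ - 1 := Real.log_le_sub_one_of_pos (by positivity)
    rw [Real.log_inv] at hinv
    rw [max_eq_left h2.le]
    calc t * (-Real.log t) ≤ t * (t⁻¹ - 1) := mul_le_mul_of_nonneg_left (by linarith) h.le
    _ = 1 - t := by field_simp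
    _ ≤ 1 := by linarith

lemma sub_one_le_mul_log {t : ℝ} (ht : 0 ≤ t) : t - 1 ≤ t * Real.log t := by
  rcases eq_or_lt_of_le ht with h | h
  · simp [← h]
  · have hinv : Real.log t⁻¹ ≤ t⁻¹ - 1 := Real.log_le_sub_one_of_pos (by positivity)
    rw [Real.log_inv] at hinv
    nlinarith [mul_le_mul_of_nonneg_left hinv h.le, mul_inv_cancel₀ h.ne']

lemma ennreal_mul_neglog_le_one {e : ℝ≥0∞} (he : e ≠ ∞) :
    e * ENNReal.ofReal (max (-Real.log e.toReal) 0) ≤ 1 := by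
  lift e to ℝ≥0 using he
  rw [ENNReal.coe_toReal, ← ENNReal.ofReal_coe_nnreal,
    ← ENNReal.ofReal_mul e.coe_nonneg]
  exact ENNReal.ofReal_le_one.mpr (mul_neglog_le_one e.coe_nonneg)

variable {α : Type*} [MeasurableSpace α] {μ ν : Measure α}

lemma lintegral_ofReal_neg_part_llr_le [IsProbabilityMeasure μ] [IsProbabilityMeasure ν]
    (hμν : μ ≪ ν) :
    ∫⁻ x, ENNReal.ofReal (max (-llr μ ν x) 0) ∂μ ≤ 1 := by
  rw [← MeasureTheory.lintegral_rnDeriv_mul hμν (f := fun x ↦ ENNReal.ofReal (max (-llr μ ν x) 0))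
    (((measurable_llr μ ν).neg.max measurable_const).ennreal_ofReal.aemeasurable)]
  calc ∫⁻ x, μ.rnDeriv ν x * ENNReal.ofReal (max (-llr μ ν x) 0) ∂ν
      ≤ ∫⁻ _, 1 ∂ν := by
        refine lintegral_mono_ae ?_
        filter_upwards [μ.rnDeriv_ne_top ν] with x hx
        simpa [llr] using ennreal_mul_neglog_le_one hx
  _ = 1 := by simp

lemma integrable_neg_part_llr [IsProbabilityMeasure μ] [IsProbabilityMeasure ν]
    (hμν : μ ≪ ν) : Integrable (fun x ↦ max (-llr μ ν x) 0) μ := by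
  refine ⟨((measurable_llr μ ν).neg.max measurable_const).aestronglyMeasurable, ?_⟩
  rw [hasFiniteIntegral_iff_norm]
  calc ∫⁻ x, ENNReal.ofReal ‖max (-llr μ ν x) 0‖ ∂μ
      = ∫⁻ x, ENNReal.ofReal (max (-llr μ ν x) 0) ∂μ := by
        congr 1; ext x; rw [Real.norm_of_nonneg (le_max_right _ _)]
  _ ≤ 1 := lintegral_ofReal_neg_part_llr_le hμν
  _ < ∞ := ENNReal.one_lt_top

lemma integral_neg_part_llr_le [IsProbabilityMeasure μ] [IsProbabilityMeasure ν]
    (hμν : μ ≪ ν) : ∫ x, max (-llr μ ν x) 0 ∂μ ≤ 1 := by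
  rw [integral_eq_lintegral_of_nonneg_ae (f := fun x ↦ max (-llr μ ν x) 0)
    (Eventually.of_forall fun x ↦ le_max_right _ _)
    ((measurable_llr μ ν).neg.max measurable_const).aestronglyMeasurable]
  calc (∫⁻ x, ENNReal.ofReal (max (-llr μ ν x) 0) ∂μ).toReal
      ≤ (1 : ℝ≥0∞).toReal :=
        ENNReal.toReal_mono (by simp) (lintegral_ofReal_neg_part_llr_le hμν)
  _ = 1 := by simp

lemma integral_llr_nonneg [IsProbabilityMeasure μ] [IsProbabilityMeasure ν]
    (hμν : μ ≪ ν) (h_int : Integrable (llr μ ν) μ) :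
    0 ≤ ∫ x, llr μ ν x ∂μ := by
  have h_int2 : Integrable (fun x ↦ (μ.rnDeriv ν x).toReal • llr μ ν x) ν :=
    (MeasureTheory.integrable_rnDeriv_smul_iff hμν).mpr h_int
  have h_int3 : Integrable (fun x ↦ (μ.rnDeriv ν x).toReal - 1) ν :=
    Measure.integrable_toReal_rnDeriv.sub (integrable_const 1)
  have hle : ∀ᵐ x ∂ν, (μ.rnDeriv ν x).toReal - 1 ≤ (μ.rnDeriv ν x).toReal • llr μ ν x := by
    refine Eventually.of_forall fun x ↦ ?_
    simpa [llr, smul_eq_mul] using sub_one_le_mul_log (ENNReal.toReal_nonneg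
      (a := μ.rnDeriv ν x))
  calc (0:ℝ) = ∫ x, ((μ.rnDeriv ν x).toReal - 1) ∂ν := by
        rw [integral_sub Measure.integrable_toReal_rnDeriv (integrable_const 1),
          Measure.integral_toReal_rnDeriv hμν]
        simp
  _ ≤ ∫ x, (μ.rnDeriv ν x).toReal • llr μ ν x ∂ν := integral_mono_ae h_int3 h_int2 hle
  _ = ∫ x, llr μ ν x ∂μ := MeasureTheory.integral_rnDeriv_smul hμν

lemma integral_norm_llr_le [IsProbabilityMeasure μ] [IsProbabilityMeasure ν]
    (hμν : μ ≪ ν) (h_int : Integrable (llr μ ν) μ) :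
    ∫ x, ‖llr μ ν x‖ ∂μ ≤ ∫ x, llr μ ν x ∂μ + 2 := by
  have habs : ∀ r : ℝ, ‖r‖ = r + 2 * max (-r) 0 := by
    intro r
    rcases le_or_gt 0 r with h | h
    · rw [Real.norm_of_nonneg h, max_eq_right (by linarith)]; ring
    · rw [Real.norm_of_nonpos h.le, max_eq_left (by linarith)]; ring
  calc ∫ x, ‖llr μ ν x‖ ∂μ
      = ∫ x, (llr μ ν x + 2 * max (-llr μ ν x) 0) ∂μ := by simp_rw [habs]
  _ = ∫ x, llr μ ν x ∂μ + 2 * ∫ x, max (-llr μ ν x) 0 ∂μ := by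
        rw [integral_add h_int ((integrable_neg_part_llr hμν).const_mul 2),
          integral_const_mul 2 _]
  _ ≤ ∫ x, llr μ ν x ∂μ + 2 := by
        have := integral_neg_part_llr_le hμν
        linarith



variable {H M : Type*} [MeasurableSpace H] [StandardBorelSpace H]
    [MeasurableSpace M] [StandardBorelSpace M]

lemma withDensity_compProd_withDensity (ν : Measure H) [IsFiniteMeasure ν]
    (η : Kernel H M) [IsFiniteKernel η] {g : H → ℝ≥0∞} (hg : Measurable g)
    {f : H → M → ℝ≥0∞} (hf : Measurable (Function.uncurry f))
    [SFinite (ν.withDensity g)] [IsSFiniteKernel (Kernel.withDensity η f)] :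
    (ν.withDensity g) ⊗ₘ (Kernel.withDensity η f)
      = (ν ⊗ₘ η).withDensity (fun p ↦ g p.1 * f p.1 p.2) := by
  have hF : Measurable (fun p : H × M ↦ g p.1 * f p.1 p.2) :=
    (hg.comp measurable_fst).mul hf
  ext s hs
  rw [Measure.compProd_apply hs, withDensity_apply _ hs,
    ← lintegral_indicator hs (f := fun p ↦ g p.1 * f p.1 p.2),
    Measure.lintegral_compProd (hF.indicator hs),
    lintegral_withDensity_eq_lintegral_mul ν hg
      (Kernel.measurable_kernel_prodMk_left hs)]
  congr 1
  ext x
  simp only [Pi.mul_apply]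
  rw [Kernel.withDensity_apply' _ hf x _]
  have h1 : ∀ y : M, s.indicator (fun p : H × M ↦ g p.1 * f p.1 p.2) (x, y)
      = (Prod.mk x ⁻¹' s).indicator (fun y ↦ g x * f x y) y := by
    intro y
    by_cases h : (x, y) ∈ s <;> simp [Set.indicator, h]
  simp_rw [h1]
  rw [lintegral_indicator (measurable_prodMk_left hs)]
  exact (lintegral_const_mul (g x) (hf.comp measurable_prodMk_left)).symm

lemma rnDeriv_compProd_ae (μ ν : Measure H) [IsFiniteMeasure μ] [IsFiniteMeasure ν]
    (κ η : Kernel H M) [IsMarkovKernel κ] [IsFiniteKernel η] :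
    (fun p : H × M ↦ μ.rnDeriv ν p.1 * Kernel.rnDeriv κ η p.1 p.2)
      =ᵐ[ν ⊗ₘ η] (μ ⊗ₘ κ).rnDeriv (ν ⊗ₘ η) := by
  have hmeas : Measurable fun p : H × M ↦ μ.rnDeriv ν p.1 * Kernel.rnDeriv κ η p.1 p.2 :=
    ((μ.measurable_rnDeriv ν).comp measurable_fst).mul (Kernel.measurable_rnDeriv κ η)
  have h1 : μ ⊗ₘ κ = μ.singularPart ν ⊗ₘ κ + (ν.withDensity (μ.rnDeriv ν)) ⊗ₘ κ := by
    rw [← Measure.compProd_add_left, ← μ.haveLebesgueDecomposition_add ν]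
  have h2 : (ν.withDensity (μ.rnDeriv ν)) ⊗ₘ κ
      = (ν.withDensity (μ.rnDeriv ν)) ⊗ₘ (Kernel.withDensity η (Kernel.rnDeriv κ η))
        + (ν.withDensity (μ.rnDeriv ν)) ⊗ₘ (Kernel.singularPart κ η) := by
    rw [← Measure.compProd_add_right, Kernel.rnDeriv_add_singularPart κ η]
  have h3 : (ν.withDensity (μ.rnDeriv ν)) ⊗ₘ (Kernel.withDensity η (Kernel.rnDeriv κ η))
      = (ν ⊗ₘ η).withDensity (fun p ↦ μ.rnDeriv ν p.1 * Kernel.rnDeriv κ η p.1 p.2) :=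
    withDensity_compProd_withDensity ν η (μ.measurable_rnDeriv ν)
      (Kernel.measurable_rnDeriv κ η)
  have hsing : (μ.singularPart ν ⊗ₘ κ
      + (ν.withDensity (μ.rnDeriv ν)) ⊗ₘ (Kernel.singularPart κ η)) ⟂ₘ (ν ⊗ₘ η) := by
    refine Measure.MutuallySingular.add_left ?_ ?_
    · obtain ⟨u, hu, huμ, huν⟩ := μ.mutuallySingular_singularPart ν
      refine ⟨u ×ˢ Set.univ, hu.prod MeasurableSet.univ, ?_, ?_⟩
      · simp [Measure.compProd_apply_prod hu MeasurableSet.univ, huμ]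
      · have hcompl : (u ×ˢ (Set.univ : Set M))ᶜ = uᶜ ×ˢ Set.univ := by
          ext p; simp
        rw [hcompl, Measure.compProd_apply_prod hu.compl MeasurableSet.univ]
        exact setLIntegral_measure_zero _ _ huν
    · refine ⟨(Kernel.mutuallySingularSet κ η)ᶜ,
        (Kernel.measurableSet_mutuallySingularSet κ η).compl, ?_, ?_⟩
      · rw [Measure.compProd_apply (Kernel.measurableSet_mutuallySingularSet κ η).compl]
        have : ∀ x, Prod.mk x ⁻¹' (Kernel.mutuallySingularSet κ η)ᶜ
            = (Kernel.mutuallySingularSetSlice κ η x)ᶜ := fun x ↦ rfl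
        simp [this, Kernel.singularPart_compl_mutuallySingularSetSlice]
      · rw [compl_compl,
          Measure.compProd_apply (Kernel.measurableSet_mutuallySingularSet κ η)]
        have : ∀ x, Prod.mk x ⁻¹' Kernel.mutuallySingularSet κ η
            = Kernel.mutuallySingularSetSlice κ η x := fun x ↦ rfl
        simp [this, Kernel.measure_mutuallySingularSetSlice]
  have hadd : μ ⊗ₘ κ = (μ.singularPart ν ⊗ₘ κ
      + (ν.withDensity (μ.rnDeriv ν)) ⊗ₘ (Kernel.singularPart κ η))
      + (ν ⊗ₘ η).withDensity (fun p ↦ μ.rnDeriv ν p.1 * Kernel.rnDeriv κ η p.1 p.2) := by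
    rw [h1, h2, h3]
    abel
  exact Measure.eq_rnDeriv hmeas hsing hadd




variable {H M : Type*} [MeasurableSpace H] [StandardBorelSpace H]
    [MeasurableSpace M] [StandardBorelSpace M]

lemma ac_kernel_of_compProd {μ ν : Measure H} [IsFiniteMeasure μ] [IsFiniteMeasure ν]
    {κ η : Kernel H M} [IsFiniteKernel κ] [IsFiniteKernel η]
    (h : μ ⊗ₘ κ ≪ ν ⊗ₘ η) : ∀ᵐ x ∂μ, κ x ≪ η x := by
  have hslice : ∀ x, Prod.mk x ⁻¹' Kernel.mutuallySingularSet κ η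
      = Kernel.mutuallySingularSetSlice κ η x := fun x ↦ rfl
  have hν : (ν ⊗ₘ η) (Kernel.mutuallySingularSet κ η) = 0 := by
    rw [Measure.compProd_apply (Kernel.measurableSet_mutuallySingularSet κ η)]
    simp [hslice, Kernel.measure_mutuallySingularSetSlice]
  have hμ : (μ ⊗ₘ κ) (Kernel.mutuallySingularSet κ η) = 0 := h hν
  rw [Measure.compProd_apply (Kernel.measurableSet_mutuallySingularSet κ η),
    lintegral_eq_zero_iff (Kernel.measurable_kernel_prodMk_left
      (Kernel.measurableSet_mutuallySingularSet κ η))] at hμ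
  filter_upwards [hμ] with x hx
  rw [← Kernel.singularPart_eq_zero_iff_absolutelyContinuous,
    Kernel.singularPart_eq_zero_iff_measure_eq_zero]
  rw [hslice x] at hx
  exact hx

lemma llr_kernel_ae {κ η : Kernel H M} [IsFiniteKernel κ] [IsFiniteKernel η] {x : H}
    (hx : κ x ≪ η x) :
    (fun y ↦ Real.log (Kernel.rnDeriv κ η x y).toReal) =ᵐ[κ x] llr (κ x) (η x) := by
  filter_upwards [hx.ae_eq (Kernel.rnDeriv_eq_rnDeriv_measure (κ := κ) (η := η) (a := x))]
    with y hy
  rw [llr, hy]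

lemma llr_compProd_ae (μ ν : Measure H) [IsProbabilityMeasure μ] [IsProbabilityMeasure ν]
    (κ η : Kernel H M) [IsMarkovKernel κ] [IsMarkovKernel η]
    (hμν : μ ≪ ν) (hκη : ∀ᵐ x ∂μ, κ x ≪ η x) :
    llr (μ ⊗ₘ κ) (ν ⊗ₘ η)
      =ᵐ[μ ⊗ₘ κ] fun p ↦ llr μ ν p.1 + Real.log (Kernel.rnDeriv κ η p.1 p.2).toReal := by
  have hJ : μ ⊗ₘ κ ≪ ν ⊗ₘ η := Measure.AbsolutelyContinuous.compProd hμν hκη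
  have hEq : ∀ᵐ p ∂(μ ⊗ₘ κ), (μ ⊗ₘ κ).rnDeriv (ν ⊗ₘ η) p
      = μ.rnDeriv ν p.1 * Kernel.rnDeriv κ η p.1 p.2 :=
    hJ.ae_eq (rnDeriv_compProd_ae μ ν κ η).symm
  have hgm : Measurable fun p : H × M ↦ μ.rnDeriv ν p.1 :=
    (μ.measurable_rnDeriv ν).comp measurable_fst
  have hg : ∀ᵐ p ∂(μ ⊗ₘ κ), 0 < μ.rnDeriv ν p.1 ∧ μ.rnDeriv ν p.1 ≠ ∞ := by
    refine Measure.ae_compProd_of_ae_ae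
      (hgm (measurableSet_Ioi.inter (measurableSet_singleton ∞).compl)) ?_
    filter_upwards [Measure.rnDeriv_pos hμν, (μ.rnDeriv_ne_top ν).filter_mono hμν.ae_le]
      with x h1 h2
    exact Eventually.of_forall fun y ↦ ⟨h1, h2⟩
  have hkm : Measurable fun p : H × M ↦ Kernel.rnDeriv κ η p.1 p.2 :=
    Kernel.measurable_rnDeriv κ η
  have hk : ∀ᵐ p ∂(μ ⊗ₘ κ), 0 < Kernel.rnDeriv κ η p.1 p.2
      ∧ Kernel.rnDeriv κ η p.1 p.2 ≠ ∞ := by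
    refine Measure.ae_compProd_of_ae_ae
      (hkm (measurableSet_Ioi.inter (measurableSet_singleton ∞).compl)) ?_
    filter_upwards [hκη] with x hx
    filter_upwards [Kernel.rnDeriv_pos hx, (Kernel.rnDeriv_ne_top κ η).filter_mono hx.ae_le]
      with y h1 h2
    exact ⟨h1, h2⟩
  filter_upwards [hEq, hg, hk] with p h1 h2 h3
  rw [llr, h1, ENNReal.toReal_mul, Real.log_mul, llr]
  · exact ENNReal.toReal_ne_zero.mpr ⟨h2.1.ne', h2.2⟩
  · exact ENNReal.toReal_ne_zero.mpr ⟨h3.1.ne', h3.2⟩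



variable {H M : Type*} [MeasurableSpace H] [StandardBorelSpace H]
    [MeasurableSpace M] [StandardBorelSpace M]
    (μ ν : Measure H) [IsProbabilityMeasure μ] [IsProbabilityMeasure ν]
    (κ η : Kernel H M) [IsMarkovKernel κ] [IsMarkovKernel η]

lemma fwd (hJ : μ ⊗ₘ κ ≪ ν ⊗ₘ η)
    (hint : Integrable (llr (μ ⊗ₘ κ) (ν ⊗ₘ η)) (μ ⊗ₘ κ)) :
    (μ ≪ ν) ∧ Integrable (llr μ ν) μ
      ∧ (∀ᵐ x ∂μ, κ x ≪ η x ∧ Integrable (llr (κ x) (η x)) (κ x))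
      ∧ Integrable (fun x ↦ ∫ y, llr (κ x) (η x) y ∂κ x) μ
      ∧ ∫ p, llr (μ ⊗ₘ κ) (ν ⊗ₘ η) p ∂(μ ⊗ₘ κ)
          = ∫ x, llr μ ν x ∂μ + ∫ x, ∫ y, llr (κ x) (η x) y ∂κ x ∂μ := by
  haveI : ∀ x, NeZero (κ x) := fun x ↦ ⟨IsProbabilityMeasure.ne_zero (κ x)⟩
  have hμν : μ ≪ ν := Measure.absolutelyContinuous_of_compProd hJ
  have hκη : ∀ᵐ x ∂μ, κ x ≪ η x := ac_kernel_of_compProd hJ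
  have measB : Measurable fun p : H × M ↦ Real.log (Kernel.rnDeriv κ η p.1 p.2).toReal :=
    Real.measurable_log.comp (Kernel.measurable_rnDeriv κ η).ennreal_toReal
  have measAB : Measurable fun p : H × M ↦ llr μ ν p.1
      + Real.log (Kernel.rnDeriv κ η p.1 p.2).toReal :=
    ((measurable_llr μ ν).comp measurable_fst).add measB
  have hC1 := llr_compProd_ae μ ν κ η hμν hκη
  have h1 : Integrable (fun p : H × M ↦ llr μ ν p.1
      + Real.log (Kernel.rnDeriv κ η p.1 p.2).toReal) (μ ⊗ₘ κ) :=
    (integrable_congr hC1).mp hint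
  obtain ⟨h2, h3⟩ := (Measure.integrable_compProd_iff measAB.aestronglyMeasurable).mp h1
  have hBint : ∀ᵐ x ∂μ, Integrable
      (fun y ↦ Real.log (Kernel.rnDeriv κ η x y).toReal) (κ x) := by
    filter_upwards [h2] with x hx
    refine (hx.sub (integrable_const (llr μ ν x))).congr (Eventually.of_forall fun y ↦ ?_)
    simp
  have hKint : ∀ᵐ x ∂μ, Integrable (llr (κ x) (η x)) (κ x) := by
    filter_upwards [hBint, hκη] with x hB hx
    exact (integrable_congr (llr_kernel_ae hx)).mp hB
  -- D x = ∫ y, (a x + B x y)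
  have hDm : StronglyMeasurable fun x ↦ ∫ y, (llr μ ν x
      + Real.log (Kernel.rnDeriv κ η x y).toReal) ∂κ x :=
    measAB.stronglyMeasurable.integral_kernel_prod_right'
  have hD : Integrable (fun x ↦ ∫ y, (llr μ ν x
      + Real.log (Kernel.rnDeriv κ η x y).toReal) ∂κ x) μ := by
    refine h3.mono hDm.aestronglyMeasurable (Eventually.of_forall fun x ↦ ?_)
    calc ‖∫ y, (llr μ ν x + Real.log (Kernel.rnDeriv κ η x y).toReal) ∂κ x‖
        ≤ ∫ y, ‖llr μ ν x + Real.log (Kernel.rnDeriv κ η x y).toReal‖ ∂κ x :=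
          norm_integral_le_integral_norm _
    _ ≤ ‖∫ y, ‖llr μ ν x + Real.log (Kernel.rnDeriv κ η x y).toReal‖ ∂κ x‖ :=
          le_abs_self _
  have hc0 : ∀ᵐ x ∂μ, ∫ y, llr (κ x) (η x) y ∂κ x
      = (∫ y, (llr μ ν x + Real.log (Kernel.rnDeriv κ η x y).toReal) ∂κ x) - llr μ ν x := by
    filter_upwards [hκη, hBint] with x hx hB
    rw [integral_add (integrable_const _) hB, integral_const]
    simp only [measure_univ, ENNReal.toReal_one, probReal_univ, one_smul]
    rw [integral_congr_ae (llr_kernel_ae hx)]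
    ring
  have ha : Integrable (llr μ ν) μ := by
    have haneg : Integrable (fun x ↦ max (-llr μ ν x) 0) μ := integrable_neg_part_llr hμν
    have hapos : Integrable (fun x ↦ max (llr μ ν x) 0) μ := by
      refine hD.mono ((measurable_llr μ ν).max measurable_const).aestronglyMeasurable ?_
      filter_upwards [hc0, hκη, hKint] with x h h2 h3
      have hnn : 0 ≤ ∫ y, llr (κ x) (η x) y ∂κ x := integral_llr_nonneg h2 h3
      rw [Real.norm_of_nonneg (le_max_right _ _)]
      have : llr μ ν x ≤ ∫ y, (llr μ ν x
          + Real.log (Kernel.rnDeriv κ η x y).toReal) ∂κ x := by linarith [h]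
      exact max_le (this.trans (le_abs_self _)) (abs_nonneg _)
    have : (fun x ↦ max (llr μ ν x) 0 - max (-llr μ ν x) 0) = llr μ ν := by
      ext x; exact max_zero_sub_max_neg_zero_eq_self _
    exact this ▸ hapos.sub haneg
  have hc : Integrable (fun x ↦ ∫ y, llr (κ x) (η x) y ∂κ x) μ :=
    (hD.sub ha).congr (by filter_upwards [hc0] with x h; rw [h]; simp)
  refine ⟨hμν, ha, hκη.and hKint, hc, ?_⟩
  calc ∫ p, llr (μ ⊗ₘ κ) (ν ⊗ₘ η) p ∂(μ ⊗ₘ κ)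
      = ∫ p, (llr μ ν p.1 + Real.log (Kernel.rnDeriv κ η p.1 p.2).toReal) ∂(μ ⊗ₘ κ) :=
        integral_congr_ae hC1
  _ = ∫ x, ∫ y, (llr μ ν x + Real.log (Kernel.rnDeriv κ η x y).toReal) ∂κ x ∂μ :=
        Measure.integral_compProd h1
  _ = ∫ x, (llr μ ν x + ∫ y, llr (κ x) (η x) y ∂κ x) ∂μ := by
        refine integral_congr_ae ?_
        filter_upwards [hc0] with x h
        rw [h]; ring
  _ = ∫ x, llr μ ν x ∂μ + ∫ x, ∫ y, llr (κ x) (η x) y ∂κ x ∂μ := integral_add ha hc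

lemma bwd (hμν : μ ≪ ν) (ha : Integrable (llr μ ν) μ)
    (hK : ∀ᵐ x ∂μ, κ x ≪ η x ∧ Integrable (llr (κ x) (η x)) (κ x))
    (hc : Integrable (fun x ↦ ∫ y, llr (κ x) (η x) y ∂κ x) μ) :
    (μ ⊗ₘ κ ≪ ν ⊗ₘ η) ∧ Integrable (llr (μ ⊗ₘ κ) (ν ⊗ₘ η)) (μ ⊗ₘ κ) := by
  have hκη : ∀ᵐ x ∂μ, κ x ≪ η x := hK.mono fun x h ↦ h.1
  have hJ : μ ⊗ₘ κ ≪ ν ⊗ₘ η := Measure.AbsolutelyContinuous.compProd hμν hκη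
  have measB : Measurable fun p : H × M ↦ Real.log (Kernel.rnDeriv κ η p.1 p.2).toReal :=
    Real.measurable_log.comp (Kernel.measurable_rnDeriv κ η).ennreal_toReal
  have measAB : Measurable fun p : H × M ↦ llr μ ν p.1
      + Real.log (Kernel.rnDeriv κ η p.1 p.2).toReal :=
    ((measurable_llr μ ν).comp measurable_fst).add measB
  have hC1 := llr_compProd_ae μ ν κ η hμν hκη
  have h1 : Integrable (fun p : H × M ↦ llr μ ν p.1
      + Real.log (Kernel.rnDeriv κ η p.1 p.2).toReal) (μ ⊗ₘ κ) := by
    refine (Measure.integrable_compProd_iff measAB.aestronglyMeasurable).mpr ⟨?_, ?_⟩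
    · filter_upwards [hK] with x hx
      exact (integrable_const _).add ((integrable_congr (llr_kernel_ae hx.1)).mpr hx.2)
    · have hNm : StronglyMeasurable fun x ↦ ∫ y, ‖llr μ ν x
          + Real.log (Kernel.rnDeriv κ η x y).toReal‖ ∂κ x :=
        measAB.norm.stronglyMeasurable.integral_kernel_prod_right'
      refine Integrable.mono' ((ha.norm.add hc.norm).add (integrable_const 2))
        hNm.aestronglyMeasurable ?_
      filter_upwards [hK] with x hx
      have hBx : Integrable (fun y ↦ Real.log (Kernel.rnDeriv κ η x y).toReal) (κ x) :=
        (integrable_congr (llr_kernel_ae hx.1)).mpr hx.2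
      have h4 : ∫ y, ‖llr μ ν x + Real.log (Kernel.rnDeriv κ η x y).toReal‖ ∂κ x
          ≤ ∫ y, (‖llr μ ν x‖ + ‖Real.log (Kernel.rnDeriv κ η x y).toReal‖) ∂κ x := by
        refine integral_mono ((integrable_const _).add hBx).norm
          ((integrable_const _).add hBx.norm) fun y ↦ norm_add_le _ _
      have h5 : ∫ y, (‖llr μ ν x‖ + ‖Real.log (Kernel.rnDeriv κ η x y).toReal‖) ∂κ x
          = ‖llr μ ν x‖ + ∫ y, ‖Real.log (Kernel.rnDeriv κ η x y).toReal‖ ∂κ x := by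
        rw [integral_add (integrable_const _) hBx.norm, integral_const]
        simp [measure_univ]
      have h6 : ∫ y, ‖Real.log (Kernel.rnDeriv κ η x y).toReal‖ ∂κ x
          = ∫ y, ‖llr (κ x) (η x) y‖ ∂κ x :=
        integral_congr_ae ((llr_kernel_ae hx.1).fun_comp norm)
      have h7 := integral_norm_llr_le hx.1 hx.2
      rw [Real.norm_of_nonneg (integral_nonneg fun y ↦ norm_nonneg _)]
      calc ∫ y, ‖llr μ ν x + Real.log (Kernel.rnDeriv κ η x y).toReal‖ ∂κ x
          ≤ ‖llr μ ν x‖ + (∫ y, llr (κ x) (η x) y ∂κ x + 2) := by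
            linarith [h4, h5, h6, h7]
      _ ≤ ‖llr μ ν x‖ + ‖∫ y, llr (κ x) (η x) y ∂κ x‖ + 2 := by
            have := le_abs_self (∫ y, llr (κ x) (η x) y ∂κ x)
            simp only [Real.norm_eq_abs]
            linarith
  exact ⟨hJ, (integrable_congr hC1).mpr h1⟩


end KLaux


/-- Kullback–Leibler divergence, valued in `ℝ≥0∞`: `∫ log (dP/dQ) dP` when `P ≪ Q` and this
integral exists (is finite), and `∞` otherwise. -/

noncomputable def KLdiv {α : Type*} [MeasurableSpace α] (P Q : Measure α) : ℝ≥0∞ :=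
  if P ≪ Q ∧ Integrable (fun x => Real.log (P.rnDeriv Q x).toReal) P
  then ENNReal.ofReal (∫ x, Real.log (P.rnDeriv Q x).toReal ∂P) else ∞


lemma KLdiv_eq {α : Type*} [MeasurableSpace α] (P Q : Measure α) :
    KLdiv P Q = if P ≪ Q ∧ Integrable (llr P Q) P
      then ENNReal.ofReal (∫ x, llr P Q x ∂P) else ∞ := rfl

theorem KLdiv_compProd {H M : Type*}
    [MeasurableSpace H] [StandardBorelSpace H]
    [MeasurableSpace M] [StandardBorelSpace M]
    (μ ν : Measure H) [IsProbabilityMeasure μ] [IsProbabilityMeasure ν]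
    (κ η : Kernel H M) [IsMarkovKernel κ] [IsMarkovKernel η] :
    KLdiv (μ ⊗ₘ κ) (ν ⊗ₘ η) = KLdiv μ ν + ∫⁻ x, KLdiv (κ x) (η x) ∂μ := by
  rw [KLdiv_eq, KLdiv_eq]
  have measB : Measurable fun p : H × M ↦ Real.log (Kernel.rnDeriv κ η p.1 p.2).toReal :=
    Real.measurable_log.comp (Kernel.measurable_rnDeriv κ η).ennreal_toReal
  by_cases hP : (μ ≪ ν ∧ Integrable (llr μ ν) μ)
    ∧ (∀ᵐ x ∂μ, κ x ≪ η x ∧ Integrable (llr (κ x) (η x)) (κ x))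
    ∧ Integrable (fun x ↦ ∫ y, llr (κ x) (η x) y ∂κ x) μ
  · obtain ⟨⟨hμν, ha⟩, hK, hc⟩ := hP
    obtain ⟨hJ, hint⟩ := KLaux.bwd μ ν κ η hμν ha hK hc
    obtain ⟨_, _, _, _, hval⟩ := KLaux.fwd μ ν κ η hJ hint
    rw [if_pos ⟨hJ, hint⟩, if_pos ⟨hμν, ha⟩]
    have hc_nonneg : 0 ≤ᵐ[μ] fun x ↦ ∫ y, llr (κ x) (η x) y ∂κ x :=
      hK.mono fun x hx ↦ KLaux.integral_llr_nonneg hx.1 hx.2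
    have hKL : ∀ᵐ x ∂μ, KLdiv (κ x) (η x)
        = ENNReal.ofReal (∫ y, llr (κ x) (η x) y ∂κ x) := by
      filter_upwards [hK] with x hx
      rw [KLdiv_eq, if_pos hx]
    rw [lintegral_congr_ae hKL, ← ofReal_integral_eq_lintegral_ofReal hc hc_nonneg, hval,
      ENNReal.ofReal_add (KLaux.integral_llr_nonneg hμν ha) (integral_nonneg_of_ae hc_nonneg)]
  · have hnJ : ¬ (μ ⊗ₘ κ ≪ ν ⊗ₘ η ∧ Integrable (llr (μ ⊗ₘ κ) (ν ⊗ₘ η)) (μ ⊗ₘ κ)) := by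
      intro h
      obtain ⟨h1, h2, h3, h4, _⟩ := KLaux.fwd μ ν κ η h.1 h.2
      exact hP ⟨⟨h1, h2⟩, h3, h4⟩
    rw [if_neg hnJ]
    symm
    by_cases h1 : μ ≪ ν ∧ Integrable (llr μ ν) μ
    swap
    · rw [if_neg h1]; exact top_add _
    · rw [if_pos h1]
      have h2 : ¬ ((∀ᵐ x ∂μ, κ x ≪ η x ∧ Integrable (llr (κ x) (η x)) (κ x))
          ∧ Integrable (fun x ↦ ∫ y, llr (κ x) (η x) y ∂κ x) μ) := fun h ↦ hP ⟨h1, h.1, h.2⟩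
      suffices h : ∫⁻ x, KLdiv (κ x) (η x) ∂μ = ∞ by rw [h]; exact add_top _
      by_cases hK : ∀ᵐ x ∂μ, κ x ≪ η x
      swap
      · have hAm : MeasurableSet {x | κ x ≪ η x} :=
          Kernel.measurableSet_absolutelyContinuous κ η
        rw [Filter.eventually_iff, mem_ae_iff] at hK
        have hKLA : ∫⁻ x in {x | κ x ≪ η x}ᶜ, KLdiv (κ x) (η x) ∂μ = ∞ := by
          rw [setLIntegral_congr_fun_ae hAm.compl
            (ae_of_all _ (fun x hx ↦ ?_ : ∀ x ∈ {x | κ x ≪ η x}ᶜ,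
              KLdiv (κ x) (η x) = (fun _ ↦ (∞ : ℝ≥0∞)) x)), setLIntegral_const,
            ENNReal.top_mul hK]
          rw [KLdiv_eq, if_neg (fun hco ↦ hx hco.1)]
        exact top_unique (hKLA ▸ setLIntegral_le_lintegral _ _)
      · by_cases hKi : ∀ᵐ x ∂μ,
          Integrable (fun y ↦ Real.log (Kernel.rnDeriv κ η x y).toReal) (κ x)
        swap
        · have hBm : MeasurableSet {x | Integrable
              (fun y ↦ Real.log (Kernel.rnDeriv κ η x y).toReal) (κ x)} :=
            ProbabilityTheory.measurableSet_kernel_integrable measB.stronglyMeasurable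
          rw [Filter.eventually_iff, mem_ae_iff] at hKi
          have hKLB : ∫⁻ x in {x | Integrable
              (fun y ↦ Real.log (Kernel.rnDeriv κ η x y).toReal) (κ x)}ᶜ,
              KLdiv (κ x) (η x) ∂μ = ∞ := by
            rw [setLIntegral_congr_fun_ae hBm.compl ?_, setLIntegral_const, ENNReal.top_mul hKi]
            filter_upwards [hK] with x hac hx
            rw [KLdiv_eq, if_neg]
            rintro ⟨hco, hint⟩
            exact hx ((integrable_congr (KLaux.llr_kernel_ae hco)).mpr hint)
          exact top_unique (hKLB ▸ setLIntegral_le_lintegral _ _)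
        · have hKae : ∀ᵐ x ∂μ, κ x ≪ η x ∧ Integrable (llr (κ x) (η x)) (κ x) := by
            filter_upwards [hK, hKi] with x h hi
            exact ⟨h, (integrable_congr (KLaux.llr_kernel_ae h)).mp hi⟩
          have hcn : ¬ Integrable (fun x ↦ ∫ y, llr (κ x) (η x) y ∂κ x) μ :=
            fun h ↦ h2 ⟨hKae, h⟩
          have hD'm : StronglyMeasurable
              (fun x ↦ ∫ y, Real.log (Kernel.rnDeriv κ η x y).toReal ∂κ x) :=
            measB.stronglyMeasurable.integral_kernel_prod_right'
          have hceq : (fun x ↦ ∫ y, llr (κ x) (η x) y ∂κ x)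
              =ᵐ[μ] fun x ↦ ∫ y, Real.log (Kernel.rnDeriv κ η x y).toReal ∂κ x := by
            filter_upwards [hK] with x hx
            exact (integral_congr_ae (KLaux.llr_kernel_ae hx)).symm
          have hKL : ∀ᵐ x ∂μ, KLdiv (κ x) (η x)
              = ENNReal.ofReal (∫ y, Real.log (Kernel.rnDeriv κ η x y).toReal ∂κ x) := by
            filter_upwards [hKae, hceq] with x hx h
            rw [KLdiv_eq, if_pos hx, h]
          have h_nonneg : ∀ᵐ x ∂μ,
              0 ≤ ∫ y, Real.log (Kernel.rnDeriv κ η x y).toReal ∂κ x := by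
            filter_upwards [hKae, hceq] with x hx h
            rw [← h]
            exact KLaux.integral_llr_nonneg hx.1 hx.2
          rw [lintegral_congr_ae hKL]
          by_contra htop
          apply hcn
          have hD'int : Integrable
              (fun x ↦ ∫ y, Real.log (Kernel.rnDeriv κ η x y).toReal ∂κ x) μ := by
            refine ⟨hD'm.aestronglyMeasurable, ?_⟩
            rw [hasFiniteIntegral_iff_norm]
            have heq : ∫⁻ x, ENNReal.ofReal
                ‖∫ y, Real.log (Kernel.rnDeriv κ η x y).toReal ∂κ x‖ ∂μ
                = ∫⁻ x, ENNReal.ofReal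
                  (∫ y, Real.log (Kernel.rnDeriv κ η x y).toReal ∂κ x) ∂μ :=
              lintegral_congr_ae (h_nonneg.mono fun x h ↦ by simp [Real.norm_of_nonneg h])
            rw [heq]
            exact lt_top_iff_ne_top.mpr htop
          exact hD'int.congr hceq.symm
end

section
/- Let H and M be standard Borel measurable spaces, let μ and ν be probability measures on H, and let κ, η : H → Measure M be Markov kernels. Then the KL divergence of the joint measures is at least the μ-average of the conditional KL divergences: KL(μ ⊗ₘ κ ‖ ν ⊗ₘ η) ≥ ∫⁻ KL(κ(x) ‖ η(x)) dμ(x). -/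
open MeasureTheory ProbabilityTheory
open scoped ENNReal Classical

-- Gibbs' inequality
lemma aux_integral_llr_nonneg {α : Type*} [MeasurableSpace α] {P Q : Measure α}
    [IsProbabilityMeasure P] [IsProbabilityMeasure Q] (hPQ : P ≪ Q)
    (h_int : Integrable (llr P Q) P) : 0 ≤ ∫ x, llr P Q x ∂P := by
  have h1 : ∀ᵐ x ∂P, 1 - llr P Q x ≤ (Q.rnDeriv P x).toReal := by
    filter_upwards [exp_neg_llr hPQ] with x hx
    rw [← hx]
    linarith [Real.add_one_le_exp (- llr P Q x)]
  have h2 : ∫ x, (1 - llr P Q x) ∂P ≤ ∫ x, (Q.rnDeriv P x).toReal ∂P :=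
    integral_mono_ae ((integrable_const 1).sub h_int) Measure.integrable_toReal_rnDeriv h1
  have h3 : ∫ x, (Q.rnDeriv P x).toReal ∂P ≤ 1 := by
    calc ∫ x, (Q.rnDeriv P x).toReal ∂P
        = ∫ x in Set.univ, (Q.rnDeriv P x).toReal ∂P := by rw [setIntegral_univ]
      _ ≤ (Q Set.univ).toReal := Measure.setIntegral_toReal_rnDeriv_le (measure_ne_top Q _)
      _ = 1 := by simp
  rw [integral_sub (integrable_const 1) h_int, integral_const] at h2
  simp only [measure_univ, ENNReal.toReal_one, smul_eq_mul, one_mul, probReal_univ, mul_one] at h2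
  linarith

lemma aux_compProd_withDensity {H M : Type*} [MeasurableSpace H]
    [MeasurableSpace M] [MeasurableSpace.CountablyGenerated M]
    (μ ν : Measure H) [IsProbabilityMeasure μ] [IsProbabilityMeasure ν]
    (κ η : Kernel H M) [IsMarkovKernel κ] [IsMarkovKernel η]
    (hμν : μ ≪ ν) (hκη : ∀ᵐ x ∂μ, κ x ≪ η x) :
    (ν ⊗ₘ η).withDensity (fun p ↦ μ.rnDeriv ν p.1 * Kernel.rnDeriv κ η p.1 p.2) = μ ⊗ₘ κ := by
  have hf_meas : Measurable (fun p : H × M ↦ μ.rnDeriv ν p.1 * Kernel.rnDeriv κ η p.1 p.2) :=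
    ((μ.measurable_rnDeriv ν).comp measurable_fst).mul (Kernel.measurable_rnDeriv κ η)
  ext s hs
  rw [withDensity_apply _ hs, ← lintegral_indicator hs, Measure.lintegral_compProd (hf_meas.indicator hs)]
  have h_inner : ∀ x, ∫⁻ y, s.indicator (fun p : H × M ↦ μ.rnDeriv ν p.1 * Kernel.rnDeriv κ η p.1 p.2) (x, y) ∂(η x)
      = μ.rnDeriv ν x * Kernel.withDensity η (Kernel.rnDeriv κ η) x (Prod.mk x ⁻¹' s) := by
    intro x
    have h_ind : ∀ y, s.indicator (fun p : H × M ↦ μ.rnDeriv ν p.1 * Kernel.rnDeriv κ η p.1 p.2) (x, y)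
        = μ.rnDeriv ν x * (Prod.mk x ⁻¹' s).indicator (fun y ↦ Kernel.rnDeriv κ η x y) y := by
      intro y
      by_cases hy : (x, y) ∈ s
      · rw [Set.indicator_of_mem hy, Set.indicator_of_mem (show y ∈ Prod.mk x ⁻¹' s from hy)]
      · rw [Set.indicator_of_notMem hy,
          Set.indicator_of_notMem (show y ∉ Prod.mk x ⁻¹' s from hy), mul_zero]
    simp_rw [h_ind]
    rw [lintegral_const_mul _ ((Kernel.measurable_rnDeriv_right κ η x).indicator
        (measurable_prodMk_left hs)),
      lintegral_indicator (measurable_prodMk_left hs),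
      Kernel.withDensity_apply _ (Kernel.measurable_rnDeriv κ η),
      withDensity_apply _ (measurable_prodMk_left hs)]
  simp_rw [h_inner]
  have hg_meas : Measurable (fun x ↦ Kernel.withDensity η (Kernel.rnDeriv κ η) x (Prod.mk x ⁻¹' s)) :=
    Kernel.measurable_kernel_prodMk_left hs
  have h_wd := lintegral_withDensity_eq_lintegral_mul ν (μ.measurable_rnDeriv ν) hg_meas
  simp only [Pi.mul_apply] at h_wd
  rw [← h_wd, Measure.withDensity_rnDeriv_eq μ ν hμν]
  rw [Measure.compProd_apply hs]
  refine lintegral_congr_ae ?_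
  filter_upwards [hκη] with x hx
  rw [Kernel.withDensity_rnDeriv_eq hx]

theorem lintegral_KLdiv_le_KLdiv_compProd {H M : Type*}
    [MeasurableSpace H] [StandardBorelSpace H]
    [MeasurableSpace M] [StandardBorelSpace M]
    (μ ν : Measure H) [IsProbabilityMeasure μ] [IsProbabilityMeasure ν]
    (κ η : Kernel H M) [IsMarkovKernel κ] [IsMarkovKernel η] :
    ∫⁻ x, KLdiv (κ x) (η x) ∂μ ≤ KLdiv (μ ⊗ₘ κ) (ν ⊗ₘ η) := by
  rw [KLdiv]
  split_ifs with h
  swap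
  · exact le_top
  obtain ⟨hac, h_int0⟩ := h
  have h_int : Integrable (llr (μ ⊗ₘ κ) (ν ⊗ₘ η)) (μ ⊗ₘ κ) := h_int0
  have hμν : μ ≪ ν := Measure.absolutelyContinuous_of_compProd hac
  -- a.e. absolute continuity of the kernels
  have hSmeas : MeasurableSet (Kernel.mutuallySingularSet κ η) :=
    Kernel.measurableSet_mutuallySingularSet κ η
  have hQS : (ν ⊗ₘ η) (Kernel.mutuallySingularSet κ η) = 0 := by
    rw [Measure.compProd_apply hSmeas]
    have h_pre : ∀ x, (Prod.mk x ⁻¹' Kernel.mutuallySingularSet κ η)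
        = Kernel.mutuallySingularSetSlice κ η x := fun _ ↦ rfl
    simp [h_pre, Kernel.measure_mutuallySingularSetSlice]
  have hPS : (μ ⊗ₘ κ) (Kernel.mutuallySingularSet κ η) = 0 := hac hQS
  have hκη : ∀ᵐ x ∂μ, κ x ≪ η x := by
    have hPS' := hPS
    rw [Measure.compProd_apply hSmeas, lintegral_eq_zero_iff
      (Kernel.measurable_kernel_prodMk_left hSmeas)] at hPS'
    filter_upwards [hPS'] with x hx
    refine (Kernel.singularPart_eq_zero_iff_absolutelyContinuous κ η x).mp ?_
    rw [Kernel.singularPart_eq_zero_iff_measure_eq_zero]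
    exact hx
  -- Radon-Nikodym derivative of the composition-product
  have hf_meas : Measurable (fun p : H × M ↦ μ.rnDeriv ν p.1 * Kernel.rnDeriv κ η p.1 p.2) :=
    ((μ.measurable_rnDeriv ν).comp measurable_fst).mul (Kernel.measurable_rnDeriv κ η)
  have h_eq := aux_compProd_withDensity μ ν κ η hμν hκη
  have h_rnDeriv : (μ ⊗ₘ κ).rnDeriv (ν ⊗ₘ η)
      =ᵐ[ν ⊗ₘ η] fun p ↦ μ.rnDeriv ν p.1 * Kernel.rnDeriv κ η p.1 p.2 := by
    rw [← h_eq]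
    exact Measure.rnDeriv_withDensity _ hf_meas
  have h_rn' := hac.ae_le h_rnDeriv
  -- positivity and finiteness
  have h_v_pos : ∀ᵐ p ∂(μ ⊗ₘ κ), 0 < μ.rnDeriv ν p.1 :=
    Measure.ae_compProd_of_ae_ae (measurableSet_lt measurable_const
      ((μ.measurable_rnDeriv ν).comp measurable_fst))
      (by filter_upwards [Measure.rnDeriv_pos hμν] with x hx using ae_of_all _ fun _ ↦ hx)
  have h_v_fin : ∀ᵐ p ∂(μ ⊗ₘ κ), μ.rnDeriv ν p.1 ≠ ∞ :=
    Measure.ae_compProd_of_ae_ae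
      (((μ.measurable_rnDeriv ν).comp measurable_fst) (measurableSet_singleton ∞)).compl
      (by filter_upwards [hμν.ae_le (Measure.rnDeriv_ne_top μ ν)] with x hx using
        ae_of_all _ fun _ ↦ hx)
  have h_u_pos : ∀ᵐ p ∂(μ ⊗ₘ κ), 0 < Kernel.rnDeriv κ η p.1 p.2 :=
    Measure.ae_compProd_of_ae_ae (measurableSet_lt measurable_const
      (Kernel.measurable_rnDeriv κ η))
      (by filter_upwards [hκη] with x hx using Kernel.rnDeriv_pos hx)
  have h_u_fin : ∀ᵐ p ∂(μ ⊗ₘ κ), Kernel.rnDeriv κ η p.1 p.2 ≠ ∞ := by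
    rw [ae_iff]
    refine measure_mono_null (fun p hp ↦ ?_) hPS
    simp only [ne_eq, not_not, Set.mem_setOf_eq] at hp
    exact (Kernel.rnDeriv_eq_top_iff κ η p.1 p.2).mp hp
  -- decomposition of the log-likelihood ratio
  have h_log : llr (μ ⊗ₘ κ) (ν ⊗ₘ η) =ᵐ[μ ⊗ₘ κ]
      fun p ↦ llr μ ν p.1 + Real.log (Kernel.rnDeriv κ η p.1 p.2).toReal := by
    filter_upwards [h_rn', h_v_pos, h_v_fin, h_u_pos, h_u_fin] with p hp h1 h2 h3 h4
    rw [llr, hp, ENNReal.toReal_mul, Real.log_mul, llr]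
    · exact (ENNReal.toReal_ne_zero).mpr ⟨h1.ne', h2⟩
    · exact (ENNReal.toReal_ne_zero).mpr ⟨h3.ne', h4⟩
  have h_int2 : Integrable
      (fun p : H × M ↦ llr μ ν p.1 + Real.log (Kernel.rnDeriv κ η p.1 p.2).toReal)
      (μ ⊗ₘ κ) := h_int.congr h_log
  obtain ⟨h_ae_int, h_int_norm⟩ :=
    (Measure.integrable_compProd_iff h_int2.aestronglyMeasurable).mp h_int2
  have h_ae_intW : ∀ᵐ x ∂μ,
      Integrable (fun y ↦ Real.log (Kernel.rnDeriv κ η x y).toReal) (κ x) := by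
    filter_upwards [h_ae_int] with x hx
    exact (hx.sub (integrable_const (llr μ ν x))).congr (ae_of_all _ fun y ↦ by
      simp [Pi.sub_apply])
  have h_kernel_llr : ∀ᵐ x ∂μ,
      (fun y ↦ Real.log (Kernel.rnDeriv κ η x y).toReal) =ᵐ[κ x] llr (κ x) (η x) := by
    filter_upwards [hκη] with x hx
    filter_upwards [hx.ae_le (Kernel.rnDeriv_eq_rnDeriv_measure (κ := κ) (η := η) (a := x))]
      with y hy
    rw [hy]; rfl
  have h_nonneg : ∀ᵐ x ∂μ, 0 ≤ ∫ y, Real.log (Kernel.rnDeriv κ η x y).toReal ∂(κ x) := by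
    filter_upwards [hκη, h_ae_intW, h_kernel_llr] with x hx hint hWllr
    rw [integral_congr_ae hWllr]
    exact aux_integral_llr_nonneg hx (hint.congr hWllr)
  -- integrability of llr μ ν
  have h_exp : ∀ᵐ x ∂μ, 1 - llr μ ν x ≤ (ν.rnDeriv μ x).toReal := by
    filter_upwards [exp_neg_llr hμν] with x hx
    rw [← hx]
    linarith [Real.add_one_le_exp (- llr μ ν x)]
  have h_Lv_int : Integrable (llr μ ν) μ := by
    refine Integrable.mono'
      (h_int_norm.add ((Measure.integrable_toReal_rnDeriv (μ := ν) (ν := μ)).add (integrable_const 1)))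
      (stronglyMeasurable_llr _ _).aestronglyMeasurable ?_
    filter_upwards [h_nonneg, h_ae_intW, h_exp, h_ae_int] with x h0 hiW hexp hix
    have hB0 : 0 ≤ ∫ y, ‖llr μ ν x + Real.log (Kernel.rnDeriv κ η x y).toReal‖ ∂(κ x) :=
      integral_nonneg fun y ↦ norm_nonneg _
    have h_up : llr μ ν x
        ≤ ∫ y, ‖llr μ ν x + Real.log (Kernel.rnDeriv κ η x y).toReal‖ ∂(κ x) := by
      have h1 : llr μ ν x ≤ ∫ y, (llr μ ν x + Real.log (Kernel.rnDeriv κ η x y).toReal) ∂(κ x) := by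
        rw [integral_add (integrable_const _) hiW, integral_const]
        simp only [measure_univ, ENNReal.toReal_one, smul_eq_mul, one_mul, probReal_univ]
        linarith
      refine h1.trans ((le_abs_self _).trans ?_)
      rw [← Real.norm_eq_abs]
      exact norm_integral_le_integral_norm _
    have h_dn : -(llr μ ν x) ≤ (ν.rnDeriv μ x).toReal - 1 := by linarith
    rw [Real.norm_eq_abs, abs_le]
    simp only [Pi.add_apply]
    constructor
    · have : 0 ≤ (ν.rnDeriv μ x).toReal := ENNReal.toReal_nonneg
      linarith
    · have : 0 ≤ (ν.rnDeriv μ x).toReal := ENNReal.toReal_nonneg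
      linarith
  -- measurability & integrability of the inner integral
  have h_meas_sum : StronglyMeasurable
      (fun p : H × M ↦ llr μ ν p.1 + Real.log (Kernel.rnDeriv κ η p.1 p.2).toReal) :=
    (((measurable_llr μ ν).comp measurable_fst).add
      ((Kernel.measurable_rnDeriv κ η).ennreal_toReal.log)).stronglyMeasurable
  have h_int_inner : Integrable
      (fun x ↦ ∫ y, (llr μ ν x + Real.log (Kernel.rnDeriv κ η x y).toReal) ∂(κ x)) μ := by
    refine h_int_norm.mono' h_meas_sum.integral_kernel_prod_right'.aestronglyMeasurable
      (ae_of_all _ fun x ↦ ?_)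
    exact norm_integral_le_integral_norm _
  have h_klK_eq : ∀ᵐ x ∂μ,
      ∫ y, (llr μ ν x + Real.log (Kernel.rnDeriv κ η x y).toReal) ∂(κ x)
        = llr μ ν x + ∫ y, Real.log (Kernel.rnDeriv κ η x y).toReal ∂(κ x) := by
    filter_upwards [h_ae_intW] with x hiW
    rw [integral_add (integrable_const _) hiW, integral_const]
    simp
  have h_klK_int : Integrable
      (fun x ↦ ∫ y, Real.log (Kernel.rnDeriv κ η x y).toReal ∂(κ x)) μ := by
    refine (h_int_inner.sub h_Lv_int).congr ?_
    filter_upwards [h_klK_eq] with x hx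
    rw [Pi.sub_apply, hx]
    ring
  have h_integral_eq : ∫ p, llr (μ ⊗ₘ κ) (ν ⊗ₘ η) p ∂(μ ⊗ₘ κ)
      = ∫ x, llr μ ν x ∂μ
        + ∫ x, (∫ y, Real.log (Kernel.rnDeriv κ η x y).toReal ∂(κ x)) ∂μ := by
    rw [integral_congr_ae h_log, Measure.integral_compProd h_int2,
      integral_congr_ae (g := fun x ↦ llr μ ν x
        + ∫ y, Real.log (Kernel.rnDeriv κ η x y).toReal ∂(κ x)) h_klK_eq]
    exact integral_add h_Lv_int h_klK_int
  have h_KL_eq : ∀ᵐ x ∂μ, KLdiv (κ x) (η x)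
      = ENNReal.ofReal (∫ y, Real.log (Kernel.rnDeriv κ η x y).toReal ∂(κ x)) := by
    filter_upwards [hκη, h_ae_intW, h_kernel_llr] with x hx hiW hWllr
    rw [KLdiv, if_pos ⟨hx, hiW.congr hWllr⟩]
    congr 1
    exact (integral_congr_ae hWllr).symm
  rw [lintegral_congr_ae h_KL_eq, ← ofReal_integral_eq_lintegral_ofReal h_klK_int h_nonneg]
  refine ENNReal.ofReal_le_ofReal ?_
  have h0 : 0 ≤ ∫ x, llr μ ν x ∂μ := aux_integral_llr_nonneg hμν h_Lv_int
  have hgoal : ∫ p, Real.log (((μ ⊗ₘ κ).rnDeriv (ν ⊗ₘ η)) p).toReal ∂(μ ⊗ₘ κ)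
      = ∫ p, llr (μ ⊗ₘ κ) (ν ⊗ₘ η) p ∂(μ ⊗ₘ κ) := rfl
  rw [hgoal, h_integral_eq]
  linarith
end

section
/- Let H and M be standard Borel measurable spaces, let μ and ν be probability measures on H, and let κ, η : H → Measure M be Markov kernels. Then the KL divergence of the joint measures is at least the KL divergence of their first marginals: KL(μ ⊗ₘ κ ‖ ν ⊗ₘ η) ≥ KL(μ ‖ ν). -/
open MeasureTheory ProbabilityTheory
open scoped ENNReal Classical

/-- Nonnegativity of the KL integral (Gibbs' inequality), via Jensen's inequality. -/
lemma integral_llr_nonneg' {α : Type*} [MeasurableSpace α] {μ ν : Measure α}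
    [IsProbabilityMeasure μ] [IsProbabilityMeasure ν] (hμν : μ ≪ ν)
    (h_int : Integrable (llr μ ν) μ) : 0 ≤ ∫ x, llr μ ν x ∂μ := by
  have h_exp : (fun x ↦ Real.exp (- llr μ ν x)) =ᵐ[μ] fun x ↦ (ν.rnDeriv μ x).toReal :=
    exp_neg_llr hμν
  have h_int_exp : Integrable (fun x ↦ Real.exp (- llr μ ν x)) μ :=
    Measure.integrable_toReal_rnDeriv.congr h_exp.symm
  have h_jensen : Real.exp (∫ x, - llr μ ν x ∂μ) ≤ ∫ x, Real.exp (- llr μ ν x) ∂μ :=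
    convexOn_exp.map_integral_le Real.continuous_exp.continuousOn isClosed_univ
      (Filter.Eventually.of_forall fun x => Set.mem_univ _) h_int.neg h_int_exp
  have h_le1 : ∫ x, Real.exp (- llr μ ν x) ∂μ ≤ 1 := by
    rw [integral_congr_ae h_exp]
    calc ∫ x, (ν.rnDeriv μ x).toReal ∂μ
        ≤ (ν Set.univ).toReal := by
          simpa using Measure.setIntegral_toReal_rnDeriv_le (μ := ν) (ν := μ)
            (measure_ne_top ν Set.univ)
      _ = 1 := by simp
  have h := h_jensen.trans h_le1
  rw [Real.exp_le_one_iff, integral_neg, neg_nonpos] at h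
  exact h

theorem KLdiv_le_KLdiv_compProd {H M : Type*}
    [MeasurableSpace H] [StandardBorelSpace H]
    [MeasurableSpace M] [StandardBorelSpace M]
    (μ ν : Measure H) [IsProbabilityMeasure μ] [IsProbabilityMeasure ν]
    (κ η : Kernel H M) [IsMarkovKernel κ] [IsMarkovKernel η] :
    KLdiv μ ν ≤ KLdiv (μ ⊗ₘ κ) (ν ⊗ₘ η) := by
  set P : Measure (H × M) := μ ⊗ₘ κ with hPdef
  set Q : Measure (H × M) := ν ⊗ₘ η with hQdef
  by_cases hPQ : P ≪ Q ∧ Integrable (fun p => Real.log (P.rnDeriv Q p).toReal) P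
  swap
  · simp only [KLdiv]
    rw [if_neg hPQ]
    exact le_top
  obtain ⟨hac, hint⟩ := hPQ
  haveI : Nonempty H := Measure.nonempty_of_neZero μ
  haveI : Nonempty M := Measure.nonempty_of_neZero (κ (Classical.arbitrary H))
  have hfstP : P.fst = μ := Measure.fst_compProd μ κ
  have hfstQ : Q.fst = ν := Measure.fst_compProd ν η
  have hμν : μ ≪ ν := by
    have h1 : P.fst ≪ Q.fst := hac.map measurable_fst
    rwa [hfstP, hfstQ] at h1
  set f : H × M → ℝ≥0∞ := P.rnDeriv Q with hfdef
  set g : H → ℝ≥0∞ := μ.rnDeriv ν with hgdef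
  have hf_meas : Measurable f := Measure.measurable_rnDeriv _ _
  have hg_meas : Measurable g := Measure.measurable_rnDeriv _ _
  set G : H → ℝ≥0∞ := fun x => ∫⁻ y, f (x, y) ∂η x with hGdef
  have hG_meas : Measurable G := hf_meas.lintegral_kernel_prod_right'
  -- `ν.withDensity G = μ`
  have hνG : ν.withDensity G = μ := by
    ext s hs
    rw [withDensity_apply _ hs]
    have h1 : μ s = P (s ×ˢ Set.univ) := by
      rw [← hfstP, Measure.fst_apply hs]
      congr 1
      ext p
      simp
    calc ∫⁻ x in s, G x ∂ν
        = ∫⁻ x in s, ∫⁻ y in Set.univ, f (x, y) ∂η x ∂ν := by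
          simp [hGdef]
      _ = ∫⁻ p in s ×ˢ Set.univ, f p ∂Q :=
          (Measure.setLIntegral_compProd hf_meas hs MeasurableSet.univ).symm
      _ = P (s ×ˢ Set.univ) := Measure.setLIntegral_rnDeriv hac _
      _ = μ s := h1.symm
  have hGg : g =ᵐ[ν] G := by
    have h := Measure.rnDeriv_withDensity ν hG_meas
    rw [hνG] at h
    exact h
  -- the corrected density kernel θ
  set c : H → ℝ≥0∞ := fun x => if g x ≠ 0 ∧ g x ≠ ∞ ∧ G x = g x then (g x)⁻¹ else 0 with hcdef
  have hc_meas : Measurable c := by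
    have hset : MeasurableSet {x | g x ≠ 0 ∧ g x ≠ ∞ ∧ G x = g x} := by
      have h1 : MeasurableSet {x | g x ≠ 0} := (hg_meas (measurableSet_singleton 0)).compl
      have h2 : MeasurableSet {x | g x ≠ ∞} := (hg_meas (measurableSet_singleton ∞)).compl
      have h3 : MeasurableSet {x | G x = g x} := by
        have he : {x | G x = g x} = {x | G x ≤ g x} ∩ {x | g x ≤ G x} := by
          ext x
          simp only [Set.mem_setOf_eq, Set.mem_inter_iff]
          exact le_antisymm_iff
        rw [he]
        exact (measurableSet_le hG_meas hg_meas).inter (measurableSet_le hg_meas hG_meas)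
      exact h1.inter (h2.inter h3)
    exact Measurable.ite hset hg_meas.inv measurable_const
  set d : H → M → ℝ≥0∞ := fun x y => c x * f (x, y) with hddef
  have hd_meas : Measurable (Function.uncurry d) :=
    (hc_meas.comp measurable_fst).mul hf_meas
  have hdx_meas : ∀ x, Measurable (d x) := fun x =>
    measurable_const.mul (hf_meas.comp measurable_prodMk_left)
  set θ : Kernel H M := Kernel.withDensity η d with hθdef
  have hθ_apply : ∀ x, θ x = (η x).withDensity (d x) := fun x =>
    Kernel.withDensity_apply η hd_meas x
  have hθ_univ : ∀ x, θ x Set.univ ≤ 1 := by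
    intro x
    rw [hθ_apply x, withDensity_apply _ MeasurableSet.univ, setLIntegral_univ]
    simp only [hddef]
    rw [lintegral_const_mul _ (show Measurable fun y => f (x, y) from
      hf_meas.comp measurable_prodMk_left)]
    by_cases hx : g x ≠ 0 ∧ g x ≠ ∞ ∧ G x = g x
    · have hcx : c x = (g x)⁻¹ := if_pos hx
      rw [hcx]
      have hGx : (∫⁻ y, f (x, y) ∂η x) = g x := hx.2.2
      rw [hGx, ENNReal.inv_mul_cancel hx.1 hx.2.1]
    · have hcx : c x = 0 := if_neg hx
      rw [hcx, zero_mul]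
      exact zero_le_one
  haveI : IsFiniteKernel θ := ⟨⟨1, ENNReal.one_lt_top, fun x => hθ_univ x⟩⟩
  -- `μ ⊗ₘ θ = P`
  have hμθ : μ ⊗ₘ θ = P := by
    ext s hs
    set J : H → ℝ≥0∞ := fun x => ∫⁻ y in Prod.mk x ⁻¹' s, f (x, y) ∂η x with hJdef
    have hJ_eq : ∀ x, J x = ∫⁻ y, (s.indicator f) (x, y) ∂η x := by
      intro x
      show (∫⁻ y in Prod.mk x ⁻¹' s, f (x, y) ∂η x) = _
      rw [← lintegral_indicator (measurable_prodMk_left hs)]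
      refine lintegral_congr fun y => ?_
      simp [Set.indicator_apply, Set.mem_preimage]
    have hJ_meas : Measurable J := by
      have : J = fun x => ∫⁻ y, (s.indicator f) (x, y) ∂η x := funext hJ_eq
      rw [this]
      exact (hf_meas.indicator hs).lintegral_kernel_prod_right'
    have hJ_le : ∀ x, J x ≤ G x := fun x => setLIntegral_le_lintegral _ _
    have hPs : P s = ∫⁻ x, J x ∂ν := by
      conv_lhs => rw [← Measure.withDensity_rnDeriv_eq P Q hac]
      rw [withDensity_apply _ hs, ← lintegral_indicator hs,
        Measure.lintegral_compProd (hf_meas.indicator hs)]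
      exact lintegral_congr fun x => (hJ_eq x).symm
    have hLHS : (μ ⊗ₘ θ) s = ∫⁻ x, c x * J x ∂μ := by
      rw [Measure.compProd_apply hs]
      refine lintegral_congr fun x => ?_
      rw [hθ_apply x, withDensity_apply _ (measurable_prodMk_left hs)]
      simp only [hddef]
      exact lintegral_const_mul _ (show Measurable fun y => f (x, y) from
        hf_meas.comp measurable_prodMk_left)
    rw [hLHS, hPs]
    conv_lhs => rw [← Measure.withDensity_rnDeriv_eq μ ν hμν]
    rw [show (∫⁻ x, c x * J x ∂ν.withDensity (μ.rnDeriv ν)) = ∫⁻ x, (c * J) x ∂ν.withDensity g from rfl,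
      lintegral_withDensity_eq_lintegral_mul ν hg_meas (hc_meas.mul hJ_meas)]
    refine lintegral_congr_ae ?_
    filter_upwards [hGg, Measure.rnDeriv_lt_top μ ν] with x hGx hfin
    simp only [Pi.mul_apply]
    by_cases h0 : g x = 0
    · have hcx : c x = 0 := by
        refine if_neg ?_
        simp [h0]
      have hJ0 : J x = 0 := by
        refine le_antisymm ?_ zero_le
        calc J x ≤ G x := hJ_le x
          _ = g x := hGx.symm
          _ = 0 := h0
      rw [hcx, hJ0]
      simp
    · have hcx : c x = (g x)⁻¹ := if_pos ⟨h0, hfin.ne, hGx.symm⟩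
      rw [hcx, ← mul_assoc, ENNReal.mul_inv_cancel h0 hfin.ne, one_mul]
  -- `κ = θ` a.e.
  have hκθ : ∀ᵐ x ∂μ, κ x = θ x := by
    have h1 : P = P.fst ⊗ₘ κ := by rw [hfstP]
    have h2 : P = P.fst ⊗ₘ θ := by rw [hfstP, hμθ]
    have e1 := eq_condKernel_of_measure_eq_compProd κ h1
    have e2 := eq_condKernel_of_measure_eq_compProd θ h2
    rw [hfstP] at e1 e2
    filter_upwards [e1, e2] with x hx1 hx2
    rw [hx1, hx2]
  -- a.e. slice facts
  have hslice_int : ∀ᵐ x ∂μ, Integrable (fun y => Real.log (f (x, y)).toReal) (κ x) :=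
    ((Measure.integrable_compProd_iff hint.aestronglyMeasurable).mp hint).1
  set F : H → ℝ := fun x => ∫ y, Real.log (f (x, y)).toReal ∂κ x with hFdef
  have hF_int : Integrable F μ := by
    have h2 := ((Measure.integrable_compProd_iff hint.aestronglyMeasurable).mp hint).2
    refine Integrable.mono' h2 ?_ ?_
    · exact ((Real.measurable_log.comp hf_meas.ennreal_toReal).stronglyMeasurable.integral_kernel_prod_right').aestronglyMeasurable
    · refine Filter.Eventually.of_forall fun x => ?_
      exact norm_integral_le_integral_norm _
  have hf_posfin : ∀ᵐ x ∂μ, ∀ᵐ y ∂κ x, 0 < f (x, y) ∧ f (x, y) < ∞ := by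
    exact Measure.ae_ae_of_ae_compProd (μ := μ) (κ := κ)
      (p := fun z => 0 < f z ∧ f z < ∞)
      ((Measure.rnDeriv_pos hac).and (hac.ae_le (Measure.rnDeriv_lt_top P Q)))
  have hg_pos : ∀ᵐ x ∂μ, 0 < g x := Measure.rnDeriv_pos hμν
  have hg_fin : ∀ᵐ x ∂μ, g x < ∞ := hμν.ae_le (Measure.rnDeriv_lt_top μ ν)
  have hGg' : ∀ᵐ x ∂μ, G x = g x := hμν.ae_le hGg.symm
  -- key pointwise inequality
  have hmain : ∀ᵐ x ∂μ, Real.log (g x).toReal ≤ F x := by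
    filter_upwards [hκθ, hslice_int, hf_posfin, hg_pos, hg_fin, hGg'] with x hθx hix hfx h0 hfin hGx
    have hcx : c x = (g x)⁻¹ := if_pos ⟨h0.ne', hfin.ne, hGx⟩
    have hκx : κ x = (η x).withDensity (d x) := by rw [hθx, hθ_apply]
    have hκac : κ x ≪ η x := by
      rw [hκx]
      exact withDensity_absolutelyContinuous _ _
    have hrn : (κ x).rnDeriv (η x) =ᵐ[η x] d x := by
      rw [hκx]
      exact Measure.rnDeriv_withDensity (η x) (hdx_meas x)
    have hrnκ : (κ x).rnDeriv (η x) =ᵐ[κ x] d x := hκac.ae_le hrn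
    have ht : 0 < (g x).toReal := ENNReal.toReal_pos h0.ne' hfin.ne
    have hllr_eq : llr (κ x) (η x)
        =ᵐ[κ x] fun y => Real.log (f (x, y)).toReal - Real.log (g x).toReal := by
      filter_upwards [hrnκ, hfx] with y hy hfy
      have hu : 0 < (f (x, y)).toReal := ENNReal.toReal_pos hfy.1.ne' hfy.2.ne
      show Real.log ((κ x).rnDeriv (η x) y).toReal = _
      rw [hy]
      have hd : d x y = (g x)⁻¹ * f (x, y) := by rw [hddef]; simp [hcx]
      rw [hd, ENNReal.toReal_mul, ENNReal.toReal_inv,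
        Real.log_mul (by positivity) hu.ne', Real.log_inv]
      ring
    have hint_llr : Integrable (llr (κ x) (η x)) (κ x) :=
      (hix.sub (integrable_const (Real.log (g x).toReal))).congr hllr_eq.symm
    have h0' := integral_llr_nonneg' hκac hint_llr
    have hcalc : ∫ y, llr (κ x) (η x) y ∂κ x = F x - Real.log (g x).toReal := by
      rw [integral_congr_ae hllr_eq, integral_sub hix (integrable_const _), integral_const]
      simp
      rfl
    rw [hcalc] at h0'
    linarith
  -- integrability of `llr μ ν`
  have hneg_meas : Measurable fun x => max (- Real.log (g x).toReal) 0 :=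
    ((Real.measurable_log.comp hg_meas.ennreal_toReal).neg).max measurable_const
  have hneg_int : Integrable (fun x => max (- Real.log (g x).toReal) 0) μ := by
    refine ⟨hneg_meas.aestronglyMeasurable, ?_⟩
    refine (hasFiniteIntegral_iff_ofReal
      (Filter.Eventually.of_forall fun x => le_max_right _ _)).mpr ?_
    refine lt_of_le_of_lt ?_ ENNReal.one_lt_top
    calc ∫⁻ x, ENNReal.ofReal (max (- Real.log (g x).toReal) 0) ∂μ
        = ∫⁻ x, (g * fun x => ENNReal.ofReal (max (- Real.log (g x).toReal) 0)) x ∂ν := by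
          conv_lhs => rw [← Measure.withDensity_rnDeriv_eq μ ν hμν]
          rw [lintegral_withDensity_eq_lintegral_mul ν hg_meas
            (show Measurable fun x => ENNReal.ofReal (max (- Real.log (g x).toReal) 0) from
              ENNReal.measurable_ofReal.comp hneg_meas)]
      _ ≤ ∫⁻ _x, 1 ∂ν := ?_
      _ = 1 := by simp
    refine lintegral_mono_ae ?_
    filter_upwards [Measure.rnDeriv_lt_top μ ν] with x hfin
    simp only [Pi.mul_apply, Function.comp_apply]
    by_cases h0 : g x = 0
    · simp [h0]
    · set t := (g x).toReal with ht_def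
      have ht : 0 < t := ENNReal.toReal_pos h0 hfin.ne
      have hgx : g x = ENNReal.ofReal t := (ENNReal.ofReal_toReal hfin.ne).symm
      rw [hgx, ← ENNReal.ofReal_mul ht.le]
      refine ENNReal.ofReal_le_one.mpr ?_
      have hmm : t * max (- Real.log t) 0 = max (t * (- Real.log t)) 0 := by
        rw [mul_max_of_nonneg _ _ ht.le, mul_zero]
      rw [hmm]
      refine max_le ?_ zero_le_one
      have hlog : Real.log t⁻¹ ≤ t⁻¹ - 1 := Real.log_le_sub_one_of_pos (inv_pos.mpr ht)
      have heq : t * (- Real.log t) = t * Real.log t⁻¹ := by rw [Real.log_inv]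
      calc t * (- Real.log t) ≤ t * (t⁻¹ - 1) := by
            rw [heq]
            exact mul_le_mul_of_nonneg_left hlog ht.le
        _ = 1 - t := by field_simp
        _ ≤ 1 := by linarith
  have hllr_int : Integrable (llr μ ν) μ := by
    refine Integrable.mono' (hF_int.abs.add hneg_int)
      (measurable_llr μ ν).aestronglyMeasurable ?_
    filter_upwards [hmain] with x hx
    simp only [Pi.add_apply]
    have h1 : llr μ ν x = Real.log (g x).toReal := rfl
    rw [Real.norm_eq_abs, h1, abs_le]
    constructor
    · have := le_max_left (- Real.log (g x).toReal) 0
      have := abs_nonneg (F x)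
      linarith
    · have := le_abs_self (F x)
      have := le_max_right (- Real.log (g x).toReal) 0
      linarith
  -- conclude
  simp only [KLdiv]
  rw [if_pos ⟨hμν, hllr_int⟩, if_pos ⟨hac, hint⟩]
  refine ENNReal.ofReal_le_ofReal ?_
  calc ∫ x, Real.log (μ.rnDeriv ν x).toReal ∂μ
      ≤ ∫ x, F x ∂μ := integral_mono_ae hllr_int hF_int hmain
    _ = ∫ p, Real.log (f p).toReal ∂P := (Measure.integral_compProd hint).symm
end
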